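/- arXiv:1804.06959 — 2 statements merged into one kernel-verified Lean document; each statement's English description precedes it below -/
import Mathlib

section
/- Let M be a finite matroid with the (t,2t)-property, where t ≥ 2. If M has a t-echidna (S₁, …, S_n) with n ≥ 4t − 3, then (S₁, …, S_n) extends to a partition of E(M) that is both a t-echidna and a t-coechidna of M; that is, there exist m ≥ n and 2-element sets S_{n+1}, …, S_m such that (S₁, …, S_m) is a partition of E(M), the union of any t of the S_i is a circuit of M, and the union of any t of the S_i is a cocircuit of M. -/
open Set

/-- A circuit of a matroid: a minimal dependent set. -/
def IsCircuit {α : Type*} (M : Matroid α) (C : Set α) : Prop :=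
  M.Dep C ∧ ∀ D, D ⊂ C → ¬ M.Dep D

/-- A cocircuit of a matroid: a circuit of the dual. -/
def IsCocircuit {α : Type*} (M : Matroid α) (C : Set α) : Prop :=
  IsCircuit M✶ C

/-- `M` has the `(t,ℓ)`-property: every `t`-element subset of the ground set is contained
in an `ℓ`-element circuit and an `ℓ`-element cocircuit. -/
def HasTLProperty {α : Type*} (M : Matroid α) (t ℓ : ℕ) : Prop :=
  ∀ X ⊆ M.E, X.ncard = t →
    (∃ C, IsCircuit M C ∧ C.ncard = ℓ ∧ X ⊆ C) ∧
    (∃ C, IsCocircuit M C ∧ C.ncard = ℓ ∧ X ⊆ C)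

/-- A `t`-echidna of order `n` in `M`: a partition `(S 1, …, S n)` of a subset of the
ground set into `2`-element sets such that the union of any `t` of them is a circuit. -/
def IsEchidna {α : Type*} (M : Matroid α) (t : ℕ) {n : ℕ} (S : Fin n → Set α) : Prop :=
  (∀ i, (S i).ncard = 2) ∧ (∀ i, S i ⊆ M.E) ∧
    (∀ i j, i ≠ j → Disjoint (S i) (S j)) ∧
    ∀ I : Finset (Fin n), I.card = t → IsCircuit M (⋃ i ∈ I, S i)

/-!
Everything rests on orthogonality: a circuit and a cocircuit never meet in exactly one element.
If a cocircuit `D` meets a spine `S i` in a single element and `t - 1` spines avoid `D`, those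
spines together with `S i` form a circuit meeting `D` in one element. As `n ≥ 3t - 1`, a
cocircuit of size `2t` through a transversal of `t` spines therefore contains them and hence
equals their union: the echidna is a coechidna, and by duality the same argument applies to
circuits of size `2t`.

For an element `e` outside the spines and `t - 1` spines, the `2t`-circuit (and the
`2t`-cocircuit) through `e` and a transversal of the spines is `{e, g}` together with those
spines, for some `g` outside all spines. Comparing circuits and cocircuits over disjoint choices
of spines, orthogonality forces `g` to be one and the same `f`, so `{e, f}` is a new spine.
Adding spines until the ground set is covered gives the partition.
-/

open scoped Finset Function

section Echidna

variable {α : Type*} {M : Matroid α} {C D : Set α}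

lemma isCircuit_iff_matroid_isCircuit : IsCircuit M C ↔ M.IsCircuit C := by
  rw [IsCircuit, Matroid.IsCircuit, minimal_iff_forall_ssubset]

lemma isCocircuit_dual_iff : IsCocircuit M✶ C ↔ IsCircuit M C := by
  rw [IsCocircuit, Matroid.dual_dual]

lemma IsCircuit.subset_ground (hC : IsCircuit M C) : C ⊆ M.E :=
  hC.1.subset_ground

lemma IsCircuit.inter_isCocircuit_ne_singleton (hC : IsCircuit M C) (hD : IsCocircuit M D)
    {e : α} : C ∩ D ≠ {e} :=
  (isCircuit_iff_matroid_isCircuit.1 hC).inter_isCocircuit_ne_singleton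
    (isCircuit_iff_matroid_isCircuit.1 hD)

lemma HasTLProperty.dual {t ℓ : ℕ} (h : HasTLProperty M t ℓ) : HasTLProperty M✶ t ℓ :=
  fun X hX hXt ↦ ⟨(h X hX hXt).2, by simpa only [isCocircuit_dual_iff] using (h X hX hXt).1⟩

lemma Finset.exists_disjoint_card_eq {ι : Type*} [Fintype ι] [DecidableEq ι] (K : Finset ι)
    {k : ℕ} (hk : k + #K ≤ Fintype.card ι) : ∃ J : Finset ι, Disjoint J K ∧ #J = k := by
  obtain ⟨J, hJK, hJ⟩ := Finset.exists_subset_card_eq (s := Kᶜ) (n := k)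
    (by rw [Finset.card_compl]; omega)
  exact ⟨J, Finset.disjoint_of_subset_left hJK disjoint_compl_left, hJ⟩

lemma Fin.exists_finset_eq_map_castSucc {n : ℕ} (I : Finset (Fin (n + 1))) :
    ∃ J : Finset (Fin n), I = J.map Fin.castSuccEmb ∨
      I = insert (Fin.last n) (J.map Fin.castSuccEmb) := by
  classical
  refine ⟨I.preimage Fin.castSucc (Fin.castSucc_injective n).injOn, ?_⟩
  by_cases h : Fin.last n ∈ I
  · right
    ext i
    cases i using Fin.lastCases <;> simp [h, Fin.castSucc_ne_last]
  · left
    ext i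
    cases i using Fin.lastCases <;> simp [h]

section PairwiseDisjoint

variable {ι : Type*} {S : ι → Set α}

lemma card_le_ncard_of_forall_not_disjoint (hS : Pairwise (Disjoint on S)) (hD : D.Finite)
    {B : Finset ι} (hB : ∀ i ∈ B, ¬Disjoint (S i) D) : #B ≤ D.ncard := by
  classical
  rw [ncard_eq_toFinset_card D hD]
  refine Finset.card_le_card_of_forall_subsingleton (fun i x ↦ x ∈ S i) (fun i hi ↦ ?_) ?_
  · obtain ⟨x, hxS, hxD⟩ := not_disjoint_iff.1 (hB i hi)
    exact ⟨x, hD.mem_toFinset.2 hxD, hxS⟩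
  · exact fun x _ i ⟨_, hi⟩ j ⟨_, hj⟩ ↦ hS.eq (not_disjoint_iff.2 ⟨x, hi, hj⟩)

lemma disjoint_biUnion_of_disjoint (hS : Pairwise (Disjoint on S)) {I J : Finset ι}
    (hIJ : Disjoint I J) : Disjoint (⋃ i ∈ I, S i) (⋃ j ∈ J, S j) := by
  simp only [disjoint_iUnion₂_left, disjoint_iUnion₂_right]
  exact fun j hj i hi ↦ hS fun h ↦ Finset.disjoint_left.1 hIJ (h ▸ hi) hj

end PairwiseDisjoint

namespace IsEchidna

variable {t n : ℕ} {S : Fin n → Set α}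

lemma ncard_eq_two (hS : IsEchidna M t S) (i : Fin n) : (S i).ncard = 2 :=
  hS.1 i

lemma finite (hS : IsEchidna M t S) (i : Fin n) : (S i).Finite :=
  finite_of_ncard_ne_zero (by simp [hS.ncard_eq_two i])

lemma subset_ground (hS : IsEchidna M t S) (i : Fin n) : S i ⊆ M.E :=
  hS.2.1 i

lemma pairwise_disjoint (hS : IsEchidna M t S) : Pairwise (Disjoint on S) :=
  fun i j hij ↦ hS.2.2.1 i j hij

lemma isCircuit_biUnion (hS : IsEchidna M t S) {I : Finset (Fin n)} (hI : #I = t) :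
    IsCircuit M (⋃ i ∈ I, S i) :=
  hS.2.2.2 I hI

lemma ncard_biUnion (hS : IsEchidna M t S) (I : Finset (Fin n)) :
    (⋃ i ∈ I, S i).ncard = 2 * #I := by
  have := Set.Finite.ncard_biUnion I.finite_toSet (fun i _ ↦ hS.finite i)
    (fun i _ j _ hij ↦ hS.pairwise_disjoint hij)
  rw [finsum_mem_coe_finset] at this
  simp only [Finset.mem_coe, hS.ncard_eq_two] at this
  rw [this, Finset.sum_const, smul_eq_mul, mul_comm]

lemma exists_injective_mem (hS : IsEchidna M t S) :
    ∃ x : Fin n → α, x.Injective ∧ ∀ i, x i ∈ S i := by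
  choose x hx using fun i ↦ nonempty_of_ncard_ne_zero (s := S i) (by simp [hS.ncard_eq_two i])
  exact ⟨x, fun i j hij ↦ hS.pairwise_disjoint.eq (not_disjoint_iff.2 ⟨x i, hx i, hij ▸ hx j⟩),
    hx⟩

lemma subset_of_isCocircuit (hS : IsEchidna M t S) (ht : 1 ≤ t) (hD : IsCocircuit M D)
    (hDfin : D.Finite) (hn : D.ncard + (t - 1) ≤ n) {i : Fin n} (hi : ¬Disjoint (S i) D) :
    S i ⊆ D := by
  classical
  by_contra hiD
  obtain ⟨y, hyS, hyD⟩ := not_subset.1 hiD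
  obtain ⟨x, hxS, hxD⟩ := not_disjoint_iff.1 hi
  have hSi : S i = {x, y} := by
    refine (eq_of_subset_of_ncard_le (pair_subset hxS hyS) ?_ ?_).symm
    · rw [hS.ncard_eq_two i, ncard_pair (by rintro rfl; exact hyD hxD)]
    · exact hS.finite i
  obtain ⟨J, hJ, hJcard⟩ :=
      Finset.exists_disjoint_card_eq {j | ¬Disjoint (S j) D} (k := t - 1) (by
    have := card_le_ncard_of_forall_not_disjoint hS.pairwise_disjoint hDfin
      (B := {j | ¬Disjoint (S j) D}) (by simp)
    simp only [Fintype.card_fin]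
    omega)
  have hJD : ∀ j ∈ J, Disjoint (S j) D := fun j hj ↦ by simpa using Finset.disjoint_left.1 hJ hj
  have hiJ : i ∉ J := fun h ↦ hi (hJD i h)
  refine (hS.isCircuit_biUnion (I := insert i J) (by rw [Finset.card_insert_of_notMem hiJ]; omega)
    ).inter_isCocircuit_ne_singleton hD (e := x) ?_
  have hJD' : ⋃ j ∈ J, S j ∩ D = ∅ := by simpa using fun j hj ↦ (hJD j hj).inter_eq
  rw [Finset.set_biUnion_insert, union_inter_distrib_right, iUnion₂_inter, hJD', hSi]
  simp [insert_inter_of_mem hxD, hyD]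

lemma isCocircuit_biUnion (hS : IsEchidna M t S) (hprop : HasTLProperty M t (2 * t))
    (ht : 1 ≤ t) (hn : 3 * t - 1 ≤ n) {I : Finset (Fin n)} (hI : #I = t) :
    IsCocircuit M (⋃ i ∈ I, S i) := by
  obtain ⟨x, hxinj, hx⟩ := hS.exists_injective_mem
  have hXE : x '' I ⊆ M.E := by
    rintro _ ⟨i, -, rfl⟩
    exact hS.subset_ground i (hx i)
  obtain ⟨D, hD, hDcard, hXD⟩ :=
    (hprop _ hXE (by rw [ncard_image_of_injective _ hxinj, ncard_coe_finset, hI])).2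
  have hDfin : D.Finite := finite_of_ncard_ne_zero (by omega)
  have hID : ⋃ i ∈ I, S i ⊆ D := iUnion₂_subset fun i hi ↦
    hS.subset_of_isCocircuit ht hD hDfin (by omega)
      (not_disjoint_iff.2 ⟨x i, hx i, hXD ⟨i, hi, rfl⟩⟩)
  rwa [eq_of_subset_of_ncard_le hID (by rw [hDcard, hS.ncard_biUnion, hI]) hDfin]

lemma dual (hS : IsEchidna M t S) (hprop : HasTLProperty M t (2 * t)) (ht : 1 ≤ t)
    (hn : 3 * t - 1 ≤ n) : IsEchidna M✶ t S :=
  ⟨hS.ncard_eq_two, hS.subset_ground, hS.2.2.1, fun _ hI ↦ hS.isCocircuit_biUnion hprop ht hn hI⟩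

lemma notMem_iUnion_of_isCocircuit (hS : IsEchidna M t S) (ht : 1 ≤ t) {e g : α}
    {J : Finset (Fin n)} (hD : IsCocircuit M (insert g (insert e (⋃ j ∈ J, S j))))
    (hDfin : (insert g (insert e (⋃ j ∈ J, S j))).Finite)
    (hn : (insert g (insert e (⋃ j ∈ J, S j))).ncard + (t - 1) ≤ n) (he : e ∉ ⋃ i, S i)
    (hg : g ∉ insert e (⋃ j ∈ J, S j)) : g ∉ ⋃ i, S i := by
  intro hgS
  obtain ⟨i, hgi⟩ := mem_iUnion.1 hgS
  have hiJ : i ∉ J := fun hi ↦ hg (mem_insert_of_mem _ (mem_biUnion hi hgi))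
  have hiA : Disjoint (S i) (insert e (⋃ j ∈ J, S j)) :=
    disjoint_insert_right.2 ⟨fun h ↦ he (mem_iUnion_of_mem i h),
      disjoint_iUnion₂_right.2 fun j hj ↦ hS.pairwise_disjoint fun h ↦ hiJ (h ▸ hj)⟩
  have hiD := hS.subset_of_isCocircuit ht hD hDfin hn
    (not_disjoint_iff.2 ⟨g, hgi, mem_insert g _⟩)
  have hig : S i ⊆ {g} := fun z hz ↦ (hiD hz).resolve_right (hiA.notMem_of_mem_left hz)
  have := ncard_le_ncard hig (finite_singleton g)
  rw [hS.ncard_eq_two i, ncard_singleton] at this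
  omega

lemma exists_isCocircuit_insert_insert (hS : IsEchidna M t S)
    (hprop : HasTLProperty M t (2 * t)) (ht : 1 ≤ t) (hn : 3 * t - 1 ≤ n) {e : α}
    (he : e ∈ M.E \ ⋃ i, S i) {J : Finset (Fin n)} (hJ : #J = t - 1) :
    ∃ g ∉ ⋃ i, S i, g ≠ e ∧ IsCocircuit M (insert e (insert g (⋃ j ∈ J, S j))) := by
  obtain ⟨x, hxinj, hx⟩ := hS.exists_injective_mem
  have hex : e ∉ x '' J := by
    rintro ⟨j, -, rfl⟩
    exact he.2 (mem_iUnion_of_mem j (hx j))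
  have hXE : insert e (x '' J) ⊆ M.E := by
    refine insert_subset he.1 ?_
    rintro _ ⟨i, -, rfl⟩
    exact hS.subset_ground i (hx i)
  obtain ⟨D, hD, hDcard, hXD⟩ := (hprop _ hXE (by
    rw [ncard_insert_of_notMem hex, ncard_image_of_injective _ hxinj, ncard_coe_finset, hJ]
    omega)).2
  have hDfin : D.Finite := finite_of_ncard_ne_zero (by omega)
  have hfull : ∀ i, ¬Disjoint (S i) D → S i ⊆ D :=
    fun i ↦ hS.subset_of_isCocircuit ht hD hDfin (by omega)
  set A := insert e (⋃ j ∈ J, S j)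
  have heU : e ∉ ⋃ j ∈ J, S j := fun h ↦ he.2 (iUnion₂_subset (fun j _ ↦ subset_iUnion S j) h)
  have hAD : A ⊆ D := insert_subset (hXD (mem_insert _ _)) (iUnion₂_subset fun j hj ↦
    hfull j (not_disjoint_iff.2 ⟨x j, hx j, hXD (mem_insert_of_mem _ ⟨j, hj, rfl⟩)⟩))
  have hAcard : A.ncard + 1 = D.ncard := by
    rw [ncard_insert_of_notMem heU (hDfin.subset (subset_insert _ _ |>.trans hAD)),
      hS.ncard_biUnion, hJ, hDcard]
    omega
  obtain ⟨g, hDg⟩ := (hDfin.subset hAD).eq_insert_of_subset_of_encard_eq_succ hAD (by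
    rw [← hDfin.cast_ncard_eq, ← (hDfin.subset hAD).cast_ncard_eq, ← hAcard]
    rfl)
  subst hDg
  have hgA : g ∉ A := fun h ↦ by simp [insert_eq_of_mem h] at hAcard
  exact ⟨g, hS.notMem_iUnion_of_isCocircuit ht hD hDfin (by rw [hDcard]; omega) he.2 hgA,
    fun h ↦ hgA (h ▸ mem_insert e _), by rwa [insert_comm]⟩

lemma eq_of_isCircuit_of_isCocircuit (hS : IsEchidna M t S) {e f g : α}
    (he : e ∉ ⋃ i, S i) (hf : f ∉ ⋃ i, S i) (hg : g ∉ ⋃ i, S i) (hfe : f ≠ e) (hge : g ≠ e)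
    {J J' : Finset (Fin n)} (hJJ' : Disjoint J J')
    (hC : IsCircuit M (insert e (insert f (⋃ j ∈ J, S j))))
    (hD : IsCocircuit M (insert e (insert g (⋃ j ∈ J', S j)))) : f = g := by
  by_contra hfg
  have hUV := disjoint_biUnion_of_disjoint hS.pairwise_disjoint hJJ'
  refine hC.inter_isCocircuit_ne_singleton hD (e := e) ?_
  ext z
  simp only [mem_inter_iff, mem_insert_iff, mem_singleton_iff]
  constructor
  · rintro ⟨rfl | rfl | hzU, h | h | hzV⟩ <;> simp_all [hUV.notMem_of_mem_left]
  · rintro rfl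
    exact ⟨Or.inl rfl, Or.inl rfl⟩

lemma exists_isCircuit_insert_insert (hS : IsEchidna M t S)
    (hprop : HasTLProperty M t (2 * t)) (ht : 1 ≤ t) (hn : 3 * t - 1 ≤ n) {e : α}
    (he : e ∈ M.E \ ⋃ i, S i) {J : Finset (Fin n)} (hJ : #J = t - 1) :
    ∃ g ∉ ⋃ i, S i, g ≠ e ∧ IsCircuit M (insert e (insert g (⋃ j ∈ J, S j))) := by
  simpa only [isCocircuit_dual_iff] using
    (hS.dual hprop ht hn).exists_isCocircuit_insert_insert hprop.dual ht hn he hJ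

lemma exists_forall_isCircuit_insert_insert (hS : IsEchidna M t S)
    (hprop : HasTLProperty M t (2 * t)) (ht : 1 ≤ t) (hn : 3 * t - 1 ≤ n) {e : α}
    (he : e ∈ M.E \ ⋃ i, S i) :
    ∃ f ∈ M.E \ ⋃ i, S i, f ≠ e ∧
      ∀ J : Finset (Fin n), #J = t - 1 → IsCircuit M (insert e (insert f (⋃ j ∈ J, S j))) := by
  classical
  obtain ⟨J₁, -, hJ₁⟩ :=
    Finset.exists_disjoint_card_eq (∅ : Finset (Fin n)) (k := t - 1) (by simp; omega)
  obtain ⟨f, hfS, hfe, hC₁⟩ := hS.exists_isCircuit_insert_insert hprop ht hn he hJ₁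
  have hD : ∀ J : Finset (Fin n), #J = t - 1 → Disjoint J₁ J →
      IsCocircuit M (insert e (insert f (⋃ j ∈ J, S j))) := by
    intro J hJ hJ₁J
    obtain ⟨g, hgS, hge, hD⟩ := hS.exists_isCocircuit_insert_insert hprop ht hn he hJ
    obtain rfl := hS.eq_of_isCircuit_of_isCocircuit he.2 hfS hgS hfe hge hJ₁J hC₁ hD
    exact hD
  -- Any `J` is disjoint from some `J'` that is itself disjoint from `J₁`.
  refine ⟨f, ⟨hC₁.subset_ground (mem_insert_of_mem _ (mem_insert _ _)), hfS⟩, hfe,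
    fun J hJ ↦ ?_⟩
  obtain ⟨g, hgS, hge, hC⟩ := hS.exists_isCircuit_insert_insert hprop ht hn he hJ
  obtain ⟨J', hJ', hJ'card⟩ := Finset.exists_disjoint_card_eq (J ∪ J₁) (k := t - 1) (by
    have := Finset.card_union_le J J₁
    simp only [Fintype.card_fin]
    omega)
  rw [Finset.disjoint_union_right] at hJ'
  obtain rfl := hS.eq_of_isCircuit_of_isCocircuit he.2 hgS hfS hge hfe hJ'.1.symm hC
    (hD J' hJ'card hJ'.2.symm)
  exact hC

lemma snoc (hS : IsEchidna M t S) (ht : 1 ≤ t) {e f : α} (he : e ∈ M.E \ ⋃ i, S i)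
    (hf : f ∈ M.E \ ⋃ i, S i) (hfe : f ≠ e)
    (hC : ∀ J : Finset (Fin n), #J = t - 1 → IsCircuit M (insert e (insert f (⋃ j ∈ J, S j)))) :
    IsEchidna M t (Fin.snoc S {e, f} : Fin (n + 1) → Set α) := by
  have hef : ∀ i, Disjoint {e, f} (S i) := fun i ↦ by
    simp only [disjoint_insert_left, disjoint_singleton_left]
    exact ⟨fun h ↦ he.2 (mem_iUnion_of_mem i h), fun h ↦ hf.2 (mem_iUnion_of_mem i h)⟩
  refine ⟨fun i ↦ ?_, fun i ↦ ?_, fun i j hij ↦ ?_, fun I hI ↦ ?_⟩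
  · cases i using Fin.lastCases <;> simp [ncard_pair hfe.symm, hS.ncard_eq_two]
  · cases i using Fin.lastCases <;> simp [insert_subset_iff, he.1, hf.1, hS.subset_ground]
  · cases i using Fin.lastCases <;> cases j using Fin.lastCases <;>
      simp_all [hS.2.2.1, (hef _).symm]
  · obtain ⟨J, rfl | rfl⟩ := Fin.exists_finset_eq_map_castSucc I
    · simp only [Finset.card_map] at hI
      simpa [Finset.map_eq_image, Finset.set_biUnion_finset_image] using hS.isCircuit_biUnion hI
    · rw [Finset.card_insert_of_notMem (by simp [Fin.castSucc_ne_last]), Finset.card_map] at hI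
      simpa [Finset.map_eq_image, Finset.set_biUnion_finset_image, insert_union] using
        hC J (by omega)

end IsEchidna

theorem IsEchidna.exists_extension_iUnion_eq_ground {t n : ℕ} {S : Fin n → Set α}
    (hS : IsEchidna M t S) (hfin : M.E.Finite) (hprop : HasTLProperty M t (2 * t)) (ht : 1 ≤ t)
    (hn : 3 * t - 1 ≤ n) :
    ∃ (m : ℕ) (hnm : n ≤ m) (T : Fin m → Set α), (∀ i : Fin n, T (Fin.castLE hnm i) = S i) ∧
      (⋃ i, T i) = M.E ∧ IsEchidna M t T := by
  by_cases hcov : M.E \ ⋃ i, S i = ∅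
  · exact ⟨n, le_rfl, S, fun _ ↦ rfl,
      (iUnion_subset hS.subset_ground).antisymm (sdiff_eq_empty.1 hcov), hS⟩
  obtain ⟨e, he⟩ := nonempty_iff_ne_empty.2 hcov
  obtain ⟨f, hf, hfe, hC⟩ := hS.exists_forall_isCircuit_insert_insert hprop ht hn he
  obtain ⟨m, hnm, T, hTS, hTE, hT⟩ :=
    (hS.snoc ht he hf hfe hC).exists_extension_iUnion_eq_ground hfin hprop ht (by omega)
  exact ⟨m, by omega, T, fun i ↦ by simpa using hTS i.castSucc, hTE, hT⟩
termination_by (M.E \ ⋃ i, S i).ncard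
decreasing_by
  rw [iUnion_snoc]
  refine ncard_lt_ncard ((ssubset_iff_of_subset (sdiff_subset_sdiff_right subset_union_left)).2
    ⟨e, he, fun h ↦ h.2 (Or.inr (mem_insert e _))⟩) hfin.sdiff

end Echidna

theorem statement7 {α : Type*} (M : Matroid α) (hfin : M.E.Finite) (t n : ℕ) (ht : 2 ≤ t)
    (hprop : HasTLProperty M t (2 * t)) (hn : 4 * t - 3 ≤ n)
    (S : Fin n → Set α) (hech : IsEchidna M t S) :
    ∃ (m : ℕ) (hnm : n ≤ m) (T : Fin m → Set α),
      (∀ i : Fin n, T (Fin.castLE hnm i) = S i) ∧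
      (⋃ i, T i) = M.E ∧ IsEchidna M t T ∧ IsEchidna M✶ t T := by
  obtain ⟨m, hnm, T, hTS, hTE, hT⟩ :=
    hech.exists_extension_iUnion_eq_ground hfin hprop (by omega) (by omega)
  exact ⟨m, hnm, T, hTS, hTE, hT, hT.dual hprop (by omega) (by omega)⟩
end

section
/- Let t ≥ 2 and let M be a t-spike of order at least 4t − 4. Then M is (2t−1)-connected; that is, for every k < 2t − 1, there is no partition (P, Q) of E(M) with |P| ≥ k, |Q| ≥ k, and λ(P) < k. -/
open Set

/-- `A` is an associated partition witnessing that `M` is a `t`-spike of order `r`: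
a partition of the ground set into `r` two-element arms (with `r ≥ t`) such that the
union of any `t` arms is both a circuit and a cocircuit. -/
def IsSpike {α : Type*} (M : Matroid α) (t r : ℕ) (A : Fin r → Set α) : Prop :=
  t ≤ r ∧ (∀ i, (A i).ncard = 2) ∧ (∀ i j, i ≠ j → Disjoint (A i) (A j)) ∧
    (⋃ i, A i) = M.E ∧
    ∀ I : Finset (Fin r), I.card = t →
      IsCircuit M (⋃ i ∈ I, A i) ∧ IsCocircuit M (⋃ i ∈ I, A i)

/-- The rank of a set in a matroid: the maximum cardinality of an independent subset. -/
noncomputable def rk {α : Type*} (M : Matroid α) (X : Set α) : ℕ :=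
  sSup {n | ∃ I, I ⊆ X ∧ M.Indep I ∧ I.ncard = n}

/-- The connectivity function `λ(X) = r(X) + r(E \ X) − r(M)`. -/
noncomputable def lambda {α : Type*} (M : Matroid α) (X : Set α) : ℤ :=
  (rk M X : ℤ) + (rk M (M.E \ X) : ℤ) - (rk M M.E : ℤ)

/-!
Fewer than `t` arms are independent, since they lie properly inside a `t`-arm circuit. A point of
arm `j` is never in the closure of a set of arms `S` with `|S| + t ≤ r`: some `t`-arm cocircuit
contains arm `j` and avoids `S`. Adding such points one at a time to fewer than `t` whole arms, a
set containing `a` arms and meeting `p` arms has rank at least `min (t - 1) a + min p (r + 1 - t)`.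
For the ground set this gives `r(M) ≥ r`; the dual is again a spike, so also `r(M✶) ≥ r`, and
`r(M) + r(M✶) = |E| = 2r` forces `r(M) = r`. Applying the rank bound to `P` and to its complement,
with `|P| = a + p` and `r ≥ 4t - 4`, the inequality `λ(P) ≥ k` is linear arithmetic.
-/

lemma Matroid.IsCocircuit.notMem_closure_of_disjoint {α : Type*} {M : Matroid α} {K X : Set α}
    {e : α} (hK : M.IsCocircuit K) (heK : e ∈ K) (hXK : Disjoint X K) : e ∉ M.closure X := by
  intro heX
  have hcl : M.closure X ⊆ M.closure (M.E \ K) := by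
    rw [← M.closure_inter_ground X]
    exact M.closure_subset_closure
      (subset_sdiff.2 ⟨inter_subset_right, hXK.mono_left inter_subset_left⟩)
  have hspan : M.Spanning (M.E \ (K \ {e})) :=
    Matroid.Coindep.compl_spanning (hK.isCircuit.ssubset_indep (sdiff_singleton_ssubset.2 heK))
  have hsub : M.E \ (K \ {e}) ⊆ M.closure (M.E \ K) := by
    rintro x ⟨hxE, hxK⟩
    by_cases hxe : x = e
    · exact hxe ▸ hcl heX
    · exact M.subset_closure _ sdiff_subset ⟨hxE, fun hx => hxK ⟨hx, hxe⟩⟩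
  have hKspan : M.Spanning (M.E \ K) := by
    rw [Matroid.spanning_iff_closure_eq sdiff_subset]
    refine subset_antisymm (M.closure_subset_ground _) ?_
    calc M.E = M.closure (M.E \ (K \ {e})) := hspan.closure_eq.symm
      _ ⊆ M.closure (M.E \ K) := M.closure_subset_closure_of_subset_closure hsub
  exact hK.isCircuit.dep.not_indep
    ((Matroid.coindep_iff_compl_spanning hK.subset_ground).2 hKspan)

lemma isCircuit_iff {α : Type*} {M : Matroid α} {C : Set α} :
    IsCircuit M C ↔ M.IsCircuit C := by
  rw [IsCircuit, Matroid.IsCircuit, minimal_iff_forall_ssubset]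

lemma le_rk_of_indep {α : Type*} {M : Matroid α} (hE : M.E.Finite) {I X : Set α}
    (hI : M.Indep I) (hIX : I ⊆ X) : I.ncard ≤ rk M X :=
  le_csSup
    ⟨M.E.ncard, by rintro _ ⟨J, -, hJ, rfl⟩; exact ncard_le_ncard hJ.subset_ground hE⟩
    ⟨I, hIX, hI, rfl⟩

lemma rk_le_of_forall_indep {α : Type*} {M : Matroid α} {X : Set α} {n : ℕ}
    (h : ∀ I, M.Indep I → I.ncard ≤ n) : rk M X ≤ n :=
  csSup_le ⟨0, ∅, empty_subset X, M.empty_indep, ncard_empty α⟩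
    (by rintro _ ⟨I, -, hI, rfl⟩; exact h I hI)

open Classical in
lemma ncard_inter_eq_ite_add_ite {α : Type*} {A X : Set α} (hA : A.ncard = 2) :
    (A ∩ X).ncard = (if A ⊆ X then 1 else 0) + (if (A ∩ X).Nonempty then 1 else 0) := by
  obtain ⟨u, v, huv, rfl⟩ := ncard_eq_two.1 hA
  by_cases hu : u ∈ X <;> by_cases hv : v ∈ X <;>
    simp [insert_subset_iff, insert_inter_of_mem, insert_inter_of_notMem, hu, hv, huv,
      singleton_inter_of_mem, singleton_inter_of_notMem]

open Classical in
noncomputable def armsInside {α : Type*} {r : ℕ} (A : Fin r → Set α) (X : Set α) :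
    Finset (Fin r) :=
  {i | A i ⊆ X}

open Classical in
noncomputable def armsMeeting {α : Type*} {r : ℕ} (A : Fin r → Set α) (X : Set α) :
    Finset (Fin r) :=
  {i | (A i ∩ X).Nonempty}

lemma mem_armsInside {α : Type*} {r : ℕ} {A : Fin r → Set α} {X : Set α} {i : Fin r} :
    i ∈ armsInside A X ↔ A i ⊆ X := by
  simp [armsInside]

lemma mem_armsMeeting {α : Type*} {r : ℕ} {A : Fin r → Set α} {X : Set α} {i : Fin r} :
    i ∈ armsMeeting A X ↔ (A i ∩ X).Nonempty := by
  simp [armsMeeting]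

namespace IsSpike

variable {α : Type*} {M : Matroid α} {t r : ℕ} {A : Fin r → Set α}

lemma le (hA : IsSpike M t r A) : t ≤ r := hA.1

lemma ncard_arm (hA : IsSpike M t r A) (i : Fin r) : (A i).ncard = 2 := hA.2.1 i

lemma disjoint_arm (hA : IsSpike M t r A) {i j : Fin r} (hij : i ≠ j) : Disjoint (A i) (A j) :=
  hA.2.2.1 i j hij

lemma iUnion_arm (hA : IsSpike M t r A) : ⋃ i, A i = M.E := hA.2.2.2.1

lemma isCircuit (hA : IsSpike M t r A) {I : Finset (Fin r)} (hI : I.card = t) :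
    M.IsCircuit (⋃ i ∈ I, A i) :=
  isCircuit_iff.1 (hA.2.2.2.2 I hI).1

lemma isCocircuit (hA : IsSpike M t r A) {I : Finset (Fin r)} (hI : I.card = t) :
    M.IsCocircuit (⋃ i ∈ I, A i) :=
  isCircuit_iff.1 (hA.2.2.2.2 I hI).2

lemma dual (hA : IsSpike M t r A) : IsSpike M✶ t r A :=
  ⟨hA.le, hA.ncard_arm, hA.2.2.1, hA.iUnion_arm, fun I hI =>
    ⟨(hA.2.2.2.2 I hI).2, by simpa [IsCocircuit] using (hA.2.2.2.2 I hI).1⟩⟩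

lemma arm_finite (hA : IsSpike M t r A) (i : Fin r) : (A i).Finite :=
  finite_of_ncard_pos (by rw [hA.ncard_arm i]; norm_num)

lemma arm_subset_ground (hA : IsSpike M t r A) (i : Fin r) : A i ⊆ M.E :=
  hA.iUnion_arm ▸ subset_iUnion A i

lemma ground_finite (hA : IsSpike M t r A) : M.E.Finite :=
  hA.iUnion_arm ▸ finite_iUnion hA.arm_finite

lemma disjoint_biUnion (hA : IsSpike M t r A) {S T : Finset (Fin r)} (hST : Disjoint S T) :
    Disjoint (⋃ i ∈ S, A i) (⋃ i ∈ T, A i) := by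
  refine disjoint_iUnion₂_left.2 fun i hi => disjoint_iUnion₂_right.2 fun j hj => ?_
  exact hA.disjoint_arm (Finset.disjoint_iff_ne.1 hST i hi j hj)

lemma ncard_biUnion_of_subset (hA : IsSpike M t r A) (S : Finset (Fin r)) {B : Fin r → Set α}
    (hB : ∀ i, B i ⊆ A i) : (⋃ i ∈ S, B i).ncard = ∑ i ∈ S, (B i).ncard := by
  rw [← Finset.set_biUnion_coe,
    S.finite_toSet.ncard_biUnion (fun i _ => (hA.arm_finite i).subset (hB i))
      (fun i _ j _ hij => (hA.disjoint_arm hij).mono (hB i) (hB j)),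
    finsum_mem_coe_finset]

lemma ncard_biUnion (hA : IsSpike M t r A) (S : Finset (Fin r)) :
    (⋃ i ∈ S, A i).ncard = 2 * S.card := by
  rw [hA.ncard_biUnion_of_subset S fun i => subset_rfl,
    Finset.sum_congr rfl fun i _ => hA.ncard_arm i, Finset.sum_const, smul_eq_mul, mul_comm]

lemma ncard_ground (hA : IsSpike M t r A) : M.E.ncard = 2 * r := by
  simpa [← hA.iUnion_arm] using hA.ncard_biUnion Finset.univ

lemma indep_biUnion (hA : IsSpike M t r A) {S : Finset (Fin r)} (hS : S.card < t) :
    M.Indep (⋃ i ∈ S, A i) := by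
  obtain ⟨T, hST, -, hT⟩ := Finset.exists_subsuperset_card_eq (Finset.subset_univ S) hS.le
    (by simpa using hA.le)
  refine (hA.isCircuit hT).ssubset_indep
    (ssubset_of_subset_of_ne (biUnion_subset_biUnion_left hST) fun h => ?_)
  have := congrArg ncard h
  rw [hA.ncard_biUnion, hA.ncard_biUnion] at this
  omega

lemma notMem_closure_of_subset_biUnion (hA : IsSpike M t r A) (ht : 1 ≤ t) {S : Finset (Fin r)}
    (hS : S.card + t ≤ r) {j : Fin r} (hj : j ∉ S) {e : α} (he : e ∈ A j) {X : Set α}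
    (hX : X ⊆ ⋃ i ∈ S, A i) : e ∉ M.closure X := by
  obtain ⟨T, hTS, hT⟩ := Finset.exists_subset_card_eq (s := (insert j S)ᶜ) (n := t - 1)
    (by rw [Finset.card_compl, Fintype.card_fin, Finset.card_insert_of_notMem hj]; omega)
  have hjT : j ∉ T := fun h => Finset.mem_compl.1 (hTS h) (Finset.mem_insert_self j S)
  have hST : Disjoint S (insert j T) := by
    rw [Finset.disjoint_insert_right]
    exact ⟨hj, Finset.disjoint_right.2 fun i hi hiS =>
      Finset.mem_compl.1 (hTS hi) (Finset.mem_insert_of_mem hiS)⟩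
  refine (hA.isCocircuit (I := insert j T) ?_).notMem_closure_of_disjoint
    (mem_biUnion (Finset.mem_insert_self j T) he) ((hA.disjoint_biUnion hST).mono_left hX)
  rw [Finset.card_insert_of_notMem hjT]
  omega

lemma exists_indep_arms_union_points (hA : IsSpike M t r A) {X : Set α} {F : Finset (Fin r)}
    (hF : ∀ i ∈ F, A i ⊆ X) (hFt : F.card < t) (G : Finset (Fin r))
    (hG : ∀ i ∈ G, (A i ∩ X).Nonempty) (hFG : Disjoint F G)
    (hr : F.card + G.card + t ≤ r + 1) :
    ∃ I ⊆ X ∩ ⋃ i ∈ F ∪ G, A i, M.Indep I ∧ I.ncard = 2 * F.card + G.card := by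
  classical
  induction G using Finset.induction_on with
  | empty =>
    refine ⟨⋃ i ∈ F, A i, ?_, hA.indep_biUnion hFt, by simp [hA.ncard_biUnion]⟩
    simpa using fun i hi => hF i hi
  | @insert j G hjG ih =>
    rw [Finset.disjoint_insert_right] at hFG
    rw [Finset.card_insert_of_notMem hjG] at hr ⊢
    obtain ⟨I, hIX, hI, hIcard⟩ :=
      ih (fun i hi => hG i (Finset.mem_insert_of_mem hi)) hFG.2 (by omega)
    obtain ⟨e, heA, heX⟩ := hG j (Finset.mem_insert_self j G)
    have hjFG : j ∉ F ∪ G := by simp [hFG.1, hjG]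
    have he : e ∉ M.closure I := hA.notMem_closure_of_subset_biUnion (by omega)
      (by have := Finset.card_union_le F G; omega) hjFG heA (hIX.trans inter_subset_right)
    have heI : e ∉ I := fun h => he (M.subset_closure I hI.subset_ground h)
    refine ⟨insert e I, insert_subset ⟨heX, ?_⟩ (hIX.trans ?_),
      (hI.insert_indep_iff_of_notMem heI).2 ⟨hA.arm_subset_ground j heA, he⟩, ?_⟩
    · exact mem_biUnion (by simp) heA
    · exact inter_subset_inter_right X (biUnion_subset_biUnion_left (by simp))
    · rw [ncard_insert_of_notMem heI (hA.ground_finite.subset hI.subset_ground), hIcard]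
      ring

lemma armsInside_subset_armsMeeting (hA : IsSpike M t r A) (X : Set α) :
    armsInside A X ⊆ armsMeeting A X := by
  intro i hi
  rw [mem_armsInside] at hi
  rw [mem_armsMeeting, inter_eq_left.2 hi]
  exact nonempty_of_ncard_ne_zero (by rw [hA.ncard_arm i]; norm_num)

lemma ncard_eq_card_armsInside_add_card_armsMeeting (hA : IsSpike M t r A) {X : Set α}
    (hX : X ⊆ M.E) : X.ncard = (armsInside A X).card + (armsMeeting A X).card := by
  classical
  have hXU : X = ⋃ i ∈ Finset.univ, A i ∩ X := by
    simpa [← iUnion_inter, hA.iUnion_arm] using hX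
  rw [hXU, hA.ncard_biUnion_of_subset _ fun i => inter_subset_left, ← hXU,
    Finset.sum_congr rfl fun i _ => ncard_inter_eq_ite_add_ite (hA.ncard_arm i),
    Finset.sum_add_distrib, Finset.sum_boole, Finset.sum_boole]
  rfl

lemma card_armsInside_add_card_armsMeeting_compl (hA : IsSpike M t r A) (X : Set α) :
    (armsInside A X).card + (armsMeeting A (M.E \ X)).card = r := by
  classical
  have h : armsMeeting A (M.E \ X) = Finset.univ.filter fun i => ¬ A i ⊆ X := by
    ext i
    rw [mem_armsMeeting, Finset.mem_filter, ← inter_sdiff_assoc,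
      inter_eq_left.2 (hA.arm_subset_ground i), sdiff_nonempty]
    simp
  rw [h, armsInside, Finset.card_filter_add_card_filter_not, Finset.card_univ, Fintype.card_fin]

lemma exists_indep_subset_ncard_eq (hA : IsSpike M t r A) (ht : 1 ≤ t) (hrt : 2 * t ≤ r + 2)
    (X : Set α) : ∃ I ⊆ X, M.Indep I ∧
      I.ncard = min (t - 1) (armsInside A X).card + min (armsMeeting A X).card (r + 1 - t) := by
  set f := min (t - 1) (armsInside A X).card
  set m := min (armsMeeting A X).card (r + 1 - t)
  have hfm : f ≤ m := by
    have := Finset.card_le_card (hA.armsInside_subset_armsMeeting X)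
    omega
  obtain ⟨F, hFX, hF⟩ :=
    Finset.exists_subset_card_eq (min_le_right (t - 1) (armsInside A X).card)
  obtain ⟨G, hGX, hG⟩ := Finset.exists_subset_card_eq (s := armsMeeting A X \ F) (n := m - f)
    (by
      rw [Finset.card_sdiff_of_subset (hFX.trans (hA.armsInside_subset_armsMeeting X)), hF]
      omega)
  obtain ⟨I, hIX, hI, hIcard⟩ := hA.exists_indep_arms_union_points (X := X) (F := F)
    (fun i hi => mem_armsInside.1 (hFX hi)) (by omega) G
    (fun i hi => mem_armsMeeting.1 (Finset.mem_sdiff.1 (hGX hi)).1)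
    (Finset.disjoint_right.2 fun i hi => (Finset.mem_sdiff.1 (hGX hi)).2) (by omega)
  exact ⟨I, hIX.trans inter_subset_left, hI, by omega⟩

lemma exists_indep_ncard_eq (hA : IsSpike M t r A) (ht : 1 ≤ t) (hrt : 2 * t ≤ r + 2) :
    ∃ I, M.Indep I ∧ I.ncard = r := by
  obtain ⟨I, -, hI, hIcard⟩ := hA.exists_indep_subset_ncard_eq ht hrt M.E
  have hE : armsInside A M.E = Finset.univ :=
    Finset.eq_univ_of_forall fun i => mem_armsInside.2 (hA.arm_subset_ground i)
  have hE' := Finset.univ_subset_iff.1 (hE ▸ hA.armsInside_subset_armsMeeting M.E)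
  rw [hE, hE', Finset.card_univ, Fintype.card_fin] at hIcard
  exact ⟨I, hI, by omega⟩

lemma ncard_le_of_indep (hA : IsSpike M t r A) (ht : 1 ≤ t) (hrt : 2 * t ≤ r + 2) {I : Set α}
    (hI : M.Indep I) : I.ncard ≤ r := by
  obtain ⟨J, hJ, hJcard⟩ := hA.dual.exists_indep_ncard_eq ht hrt
  have h1 := hI.encard_le_eRank
  have h2 := hJ.encard_le_eRank
  rw [← (hA.ground_finite.subset hI.subset_ground).cast_ncard_eq] at h1
  rw [← (hA.dual.ground_finite.subset hJ.subset_ground).cast_ncard_eq, hJcard] at h2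
  have hsum : (I.ncard + r : ℕ∞) ≤ M.E.ncard := by
    rw [hA.ground_finite.cast_ncard_eq, ← M.eRank_add_eRank_dual]
    exact add_le_add h1 h2
  norm_cast at hsum
  have := hA.ncard_ground
  omega

lemma rk_ground (hA : IsSpike M t r A) (ht : 1 ≤ t) (hrt : 2 * t ≤ r + 2) : rk M M.E = r := by
  obtain ⟨I, hI, hIcard⟩ := hA.exists_indep_ncard_eq ht hrt
  exact (rk_le_of_forall_indep fun J hJ => hA.ncard_le_of_indep ht hrt hJ).antisymm
    (hIcard ▸ le_rk_of_indep hA.ground_finite hI hI.subset_ground)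

lemma min_add_min_le_rk (hA : IsSpike M t r A) (ht : 1 ≤ t) (hrt : 2 * t ≤ r + 2) (X : Set α) :
    min (t - 1) (armsInside A X).card + min (armsMeeting A X).card (r + 1 - t) ≤ rk M X := by
  obtain ⟨I, hIX, hI, hIcard⟩ := hA.exists_indep_subset_ncard_eq ht hrt X
  exact hIcard ▸ le_rk_of_indep hA.ground_finite hI hIX

end IsSpike

theorem statement18_general {α : Type*} (M : Matroid α) (t r : ℕ)
    (hr : 4 * t - 4 ≤ r) (A : Fin r → Set α) (hA : IsSpike M t r A) :
    ∀ k : ℕ, k < 2 * t - 1 →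
      ¬ ∃ P Q : Set α, P ∪ Q = M.E ∧ Disjoint P Q ∧
        k ≤ P.ncard ∧ k ≤ Q.ncard ∧ lambda M P < (k : ℤ) := by
  rintro k hk ⟨P, Q, hPQ, hdisj, hkP, hkQ, hlam⟩
  have ht : 1 ≤ t := by omega
  have hrt : 2 * t ≤ r + 2 := by omega
  have hPE : P ⊆ M.E := hPQ ▸ subset_union_left
  have hQ : M.E \ P = Q := by rw [← hPQ, union_sdiff_left, hdisj.symm.sdiff_eq_left]
  have hP : M.E \ Q = P := by rw [← hQ, sdiff_sdiff_cancel_left hPE]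
  have hsizeP := hA.ncard_eq_card_armsInside_add_card_armsMeeting hPE
  have hsizeQ := hA.ncard_eq_card_armsInside_add_card_armsMeeting (hQ ▸ sdiff_subset)
  have hinP := Finset.card_le_card (hA.armsInside_subset_armsMeeting P)
  have hinQ := Finset.card_le_card (hA.armsInside_subset_armsMeeting Q)
  have hPQarms := hQ ▸ hA.card_armsInside_add_card_armsMeeting_compl P
  have hQParms := hP ▸ hA.card_armsInside_add_card_armsMeeting_compl Q
  have hrkP := hA.min_add_min_le_rk ht hrt P
  have hrkQ := hA.min_add_min_le_rk ht hrt Q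
  rw [lambda, hQ, hA.rk_ground ht hrt] at hlam
  omega

theorem statement18 {α : Type*} (M : Matroid α) (t r : ℕ) (ht : 2 ≤ t)
    (hr : 4 * t - 4 ≤ r) (A : Fin r → Set α) (hA : IsSpike M t r A) :
    ∀ k : ℕ, k < 2 * t - 1 →
      ¬ ∃ P Q : Set α, P ∪ Q = M.E ∧ Disjoint P Q ∧
        k ≤ P.ncard ∧ k ≤ Q.ncard ∧ lambda M P < (k : ℤ) :=
  statement18_general M t r hr A hA
end
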